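/- arXiv:1611.08496 — 3 statements merged into one kernel-verified Lean document; each statement's English description precedes it below -/
import Mathlib

section
/- For every ν ∈ (0,1] there exists n₀ ∈ ℕ such that the following holds for every n ≥ n₀. Let μ be a real number with 400ν ≤ μ ≤ 1 and let p ∈ (0,1]. Let D be a degree sequence on V = [n] with R^D_p ≥ μn, and let S ⊆ V satisfy Σ_{v∈S} d(v) ≤ νn. Let G be any simple graph on V with degree sequence D, let G′ be obtained from G by deleting all vertices in S and afterwards deleting all vertices of degree 0, let D′ be the degree sequence of G′ and let n′ be its length. Then n′ ≥ (1−2ν)n and R^{D′}_p ≥ (μ/50)·n′. -/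
/-!
Charge each vertex of `S` its degree and each other vertex its number of neighbours in `S`. By
double counting the total charge `C` is at most `2 Σ_{v∈S} d(v) ≤ 2νn`, and every vertex that
disappears carries charge at least `1`, so `n' ≥ n - C`.

Let `θ` be the degree at the pivot position `j^D_p`. A vertex of the tail of `D` that lands in
the prefix of `D'` either keeps degree at least `θ/2`, so that its drift `p(d-1)-1` is at most
`2/θ` times its weighted drift `d(p(d-1)-1)`, or it has lost half of its degree, which its charge
pays for. The prefix of `D'` has nonpositive total weighted drift, while the prefix of `D` up to
the pivot has positive total weighted drift; summing the vertex bounds therefore gives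
`R^D_p ≤ 2R^{D'}_p + 2(p(θ-1)-1) + 5C`. The pivot term is at most `R^{D'}_p + C` because
`R^{D'}_p` dominates the drift of every entry of `D'`. Hence `R^D_p ≤ 4R^{D'}_p + 7C`, while
`C ≤ μn/200`.
-/

open Finset

noncomputable section
open scoped Classical

/-- Partial sum `Σ_{i=1}^{j} d_i (p(d_i - 1) - 1)` of the first `j` entries of the
degree sequence `D` (indexed by `Fin n`, `0`-based). -/
def driftPartialSum (n : ℕ) (D : Fin n → ℕ) (p : ℝ) (j : ℕ) : ℝ :=
  ∑ i ∈ Finset.univ.filter (fun i : Fin n => (i : ℕ) < j),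
    (D i : ℝ) * (p * ((D i : ℝ) - 1) - 1)

/-- `j^D_p`: the minimum of `n` and the smallest `j ∈ ℕ` with
`Σ_{i=1}^{j} d_i (p(d_i-1)-1) > 0` (equal to `n` if no such `j` exists). -/
def jDp (n : ℕ) (D : Fin n → ℕ) (p : ℝ) : ℕ :=
  if h : ∃ j : ℕ, 0 < driftPartialSum n D p j then min n (Nat.find h) else n

/-- `R^D_p := Σ_{i=j^D_p}^{n} (p(d_i - 1) - 1)` (`1`-based indices, so the `0`-based
index `i` contributes iff `j^D_p ≤ i + 1`). -/
def RDp (n : ℕ) (D : Fin n → ℕ) (p : ℝ) : ℝ :=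
  ∑ i ∈ Finset.univ.filter (fun i : Fin n => jDp n D p ≤ (i : ℕ) + 1),
    (p * ((D i : ℝ) - 1) - 1)

/-- Degree of `v` in the graph obtained from `G` by deleting the vertices of `S`. -/
def degDel {n : ℕ} (G : SimpleGraph (Fin n)) (S : Finset (Fin n)) (v : Fin n) : ℕ :=
  (Finset.univ.filter (fun w => G.Adj v w ∧ w ∉ S)).card


def drift (p x : ℝ) : ℝ := p * (x - 1) - 1

def weightedDrift (p x : ℝ) : ℝ := x * drift p x

section Drift

variable {p x y θ : ℝ}

theorem drift_le_drift_add (hp1 : p ≤ 1) (hyx : y ≤ x) : drift p x ≤ drift p y + (x - y) := by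
  unfold drift; nlinarith

theorem drift_le_self (hp : 0 ≤ p) (hp1 : p ≤ 1) (hx : 0 ≤ x) : drift p x ≤ x := by
  unfold drift; nlinarith

theorem drift_mono (hp : 0 ≤ p) : Monotone (drift p) := fun x y hxy => by
  unfold drift; nlinarith

theorem drift_pos_of_weightedDrift_pos (hx : 0 ≤ x) (h : 0 < weightedDrift p x) :
    0 < drift p x :=
  pos_of_mul_pos_right h hx

theorem weightedDrift_le_mul_max (hx : 0 ≤ x) (hxθ : x ≤ θ) :
    weightedDrift p x ≤ θ * max (drift p x) 0 :=
  calc x * drift p x ≤ x * max (drift p x) 0 := mul_le_mul_of_nonneg_left (le_max_left _ _) hx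
    _ ≤ θ * max (drift p x) 0 := mul_le_mul_of_nonneg_right hxθ (le_max_right _ _)

theorem weightedDrift_sub_le (hp : 0 ≤ p) (hp1 : p ≤ 1) (hy : 0 ≤ y) (hyx : y ≤ x)
    (hxθ : x ≤ θ) : weightedDrift p x - weightedDrift p y ≤ 2 * θ * (x - y) := by
  have hfactor : weightedDrift p x - weightedDrift p y = (x - y) * (p * (x + y) - p - 1) := by
    unfold weightedDrift drift; ring
  have hslope : p * (x + y) - p - 1 ≤ 2 * θ := by nlinarith
  rw [hfactor]
  nlinarith

theorem neg_weightedDrift_le (hp1 : p ≤ 1) (hy : 0 ≤ y) (hyx : y ≤ x)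
    (hfy : drift p y ≤ 0) (hfx : 0 < drift p x) : -weightedDrift p y ≤ 2 * (x - y) := by
  unfold weightedDrift drift at *
  nlinarith

theorem mul_drift_le (hp : 0 ≤ p) (hp1 : p ≤ 1) (hθ : 1 ≤ θ) (hθx : θ ≤ x) (hy : 0 ≤ y)
    (hyx : y ≤ x) (hfx : 0 < drift p x) :
    θ * drift p y ≤ 2 * weightedDrift p y + 4 * θ * (x - y) := by
  -- Either `y` has nonpositive drift, or `2y ≥ θ`, or `x` lost more than half of itself.
  rcases le_or_gt (drift p y) 0 with hfy | hfy
  · have := neg_weightedDrift_le hp1 hy hyx hfy hfx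
    nlinarith
  rcases le_or_gt θ (2 * y) with hθy | hyθ
  · have : θ * drift p y ≤ 2 * y * drift p y := mul_le_mul_of_nonneg_right hθy hfy.le
    unfold weightedDrift
    nlinarith
  · have := drift_le_self hp hp1 hy
    have : 0 ≤ weightedDrift p y := mul_nonneg hy hfy.le
    nlinarith

end Drift

section Charge

variable {p θ x y c : ℝ} {a o : Prop} [Decidable a] [Decidable o]

theorem drift_le_of_tail (hp : 0 ≤ p) (hp1 : p ≤ 1) (hθ : 1 ≤ θ) (hθx : θ ≤ x)
    (hfx : 0 < drift p x) (hy : 0 ≤ y) (hyx : y ≤ x) (hc : x - y ≤ c) (hdead : ¬a → ¬o → x ≤ c)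
    (ho : o → 0 ≤ drift p y) :
    θ * drift p x ≤ 2 * θ * (if o then drift p y else 0)
      + 2 * (if a then weightedDrift p y else 0) + 5 * θ * c := by
  have hfxy := drift_le_drift_add hp1 hyx
  have hO : 0 ≤ 2 * θ * (if o then drift p y else 0) := by
    split_ifs with h
    · exact mul_nonneg (by linarith) (ho h)
    · simp
  by_cases ha : a
  · have := mul_drift_le hp hp1 hθ hθx hy hyx hfx
    simp only [ha, if_true]
    nlinarith
  by_cases ho' : o
  · have := ho ho'
    simp only [ha, ho', if_true, if_false]
    nlinarith
  · have := drift_le_self hp hp1 (hy.trans hyx)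
    have := hdead ha ho'
    simp only [ha, ho', if_false]
    nlinarith

theorem weightedDrift_le_of_prefix (hp : 0 ≤ p) (hp1 : p ≤ 1) (hxθ : x ≤ θ) (hy : 0 ≤ y)
    (hyx : y ≤ x) (hc : x - y ≤ c) (hdead : ¬a → ¬o → x ≤ c) (ho : o → 0 ≤ drift p y) :
    2 * weightedDrift p x ≤ 2 * θ * (if o then drift p y else 0)
      + 2 * (if a then weightedDrift p y else 0) + 5 * θ * c := by
  have hgx := weightedDrift_le_mul_max (p := p) (hy.trans hyx) hxθ
  have hθ : 0 ≤ θ := by linarith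
  have hO : 0 ≤ 2 * θ * (if o then drift p y else 0) := by
    split_ifs with h
    · exact mul_nonneg (by linarith) (ho h)
    · simp
  by_cases ha : a
  · have := weightedDrift_sub_le hp hp1 hy hyx hxθ
    simp only [ha, if_true]
    nlinarith
  by_cases ho' : o
  · have : max (drift p x) 0 ≤ drift p y + (x - y) :=
      max_le (drift_le_drift_add hp1 hyx) (by linarith [ho ho'])
    simp only [ha, ho', if_true, if_false]
    nlinarith
  · have := drift_le_self hp hp1 (hy.trans hyx)
    have : max (drift p x) 0 ≤ c := max_le (by linarith [hdead ha ho']) (by linarith)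
    simp only [ha, ho', if_false]
    nlinarith

end Charge

theorem sum_drift_le_of_charge {V : Type*} [Fintype V] [DecidableEq V] {p θ : ℝ}
    (hp : 0 ≤ p) (hp1 : p ≤ 1) (hθ : 1 ≤ θ) {d d' c : V → ℝ} {T A O : Finset V}
    (hd' : ∀ v, 0 ≤ d' v) (hd'd : ∀ v, d' v ≤ d v) (hloss : ∀ v, d v - d' v ≤ c v)
    (hdead : ∀ v, v ∉ A → v ∉ O → d v ≤ c v)
    (hT : ∀ v ∈ T, θ ≤ d v ∧ 0 < drift p (d v)) (hTc : ∀ v ∉ T, d v ≤ θ)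
    (hO : ∀ v ∈ O, 0 ≤ drift p (d' v))
    (hold : 0 < ∑ v ∈ Tᶜ, weightedDrift p (d v) + weightedDrift p θ)
    (hnew : ∑ v ∈ A, weightedDrift p (d' v) ≤ 0) :
    ∑ v ∈ T, drift p (d v) ≤ 2 * ∑ v ∈ O, drift p (d' v) + 2 * drift p θ + 5 * ∑ v, c v := by
  -- After summing over `v`, `hold` and `hnew` absorb the weighted-drift terms.
  have key : ∀ v, θ * (if v ∈ T then drift p (d v) else 0)
      + 2 * (if v ∈ Tᶜ then weightedDrift p (d v) else 0)
      ≤ 2 * θ * (if v ∈ O then drift p (d' v) else 0)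
        + 2 * (if v ∈ A then weightedDrift p (d' v) else 0) + 5 * θ * c v := by
    intro v
    by_cases hvT : v ∈ T
    · simpa [hvT] using drift_le_of_tail hp hp1 hθ (hT v hvT).1 (hT v hvT).2 (hd' v) (hd'd v)
        (hloss v) (hdead v) (hO v)
    · simpa [hvT] using weightedDrift_le_of_prefix hp hp1 (hTc v hvT) (hd' v) (hd'd v)
        (hloss v) (hdead v) (hO v)
  have hsum := sum_le_sum fun v (_ : v ∈ univ) => key v
  simp only [sum_add_distrib, ← mul_sum, sum_ite_mem, univ_inter] at hsum
  have hgθ : weightedDrift p θ = θ * drift p θ := rfl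
  refine le_of_mul_le_mul_left ?_ (by linarith : 0 < θ)
  linarith

section DegreeSequence

variable {n : ℕ} {D : Fin n → ℕ} {p : ℝ}

def driftTail (n : ℕ) (D : Fin n → ℕ) (p : ℝ) : Finset (Fin n) :=
  univ.filter fun i => jDp n D p ≤ (i : ℕ) + 1

theorem mem_driftTail {i : Fin n} : i ∈ driftTail n D p ↔ jDp n D p ≤ (i : ℕ) + 1 := by
  simp [driftTail]

theorem RDp_eq_sum_driftTail : RDp n D p = ∑ i ∈ driftTail n D p, drift p (D i) := rfl

theorem jDp_le : jDp n D p ≤ n := by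
  unfold jDp; split
  · exact min_le_left _ _
  · exact le_rfl

theorem driftPartialSum_nonpos_of_lt_jDp {m : ℕ} (h : m < jDp n D p) :
    driftPartialSum n D p m ≤ 0 := by
  by_contra! hpos
  unfold jDp at h
  have hex : ∃ j, 0 < driftPartialSum n D p j := ⟨m, hpos⟩
  rw [dif_pos hex] at h
  exact absurd (Nat.find_min' hex hpos) (by omega)

theorem driftPartialSum_jDp_pos (h : jDp n D p < n) :
    0 < driftPartialSum n D p (jDp n D p) := by
  unfold jDp at h ⊢
  split_ifs at h ⊢ with hex
  · rw [min_eq_right (by omega)]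
    exact Nat.find_spec hex
  · omega

theorem jDp_pos (hn : 0 < n) : 0 < jDp n D p := by
  unfold jDp; split_ifs with hex
  · refine lt_min hn (Nat.pos_of_ne_zero fun h0 => ?_)
    have := Nat.find_spec hex
    rw [h0] at this
    simp [driftPartialSum] at this
  · exact hn

theorem driftPartialSum_succ {m : ℕ} (hm : m < n) :
    driftPartialSum n D p (m + 1) = driftPartialSum n D p m + weightedDrift p (D ⟨m, hm⟩) := by
  have hfilter : univ.filter (fun i : Fin n => (i : ℕ) < m + 1)
      = insert ⟨m, hm⟩ (univ.filter fun i : Fin n => (i : ℕ) < m) := by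
    ext i
    simp only [Order.lt_add_one_iff, mem_filter, mem_univ, true_and, mem_insert, Fin.ext_iff]
    omega
  rw [driftPartialSum, hfilter, sum_insert (by simp), add_comm]
  rfl

theorem sum_compl_driftTail (hn : 0 < n) :
    ∑ i ∈ (driftTail n D p)ᶜ, weightedDrift p (D i)
      = driftPartialSum n D p (jDp n D p - 1) := by
  have hj := jDp_pos (D := D) (p := p) hn
  rw [driftPartialSum]
  congr 1
  ext i
  simp only [driftTail, compl_filter, not_le, mem_filter, mem_univ, true_and]
  omega

theorem sum_weightedDrift_compl_driftTail_nonpos (hn : 0 < n) :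
    ∑ i ∈ (driftTail n D p)ᶜ, weightedDrift p (D i) ≤ 0 := by
  rw [sum_compl_driftTail hn]
  exact driftPartialSum_nonpos_of_lt_jDp (by have := jDp_pos (D := D) (p := p) hn; omega)

theorem exists_pivot (hj : jDp n D p < n) :
    ∃ k : Fin n, (∀ i, i ∈ driftTail n D p ↔ k ≤ i) ∧
      0 < ∑ i ∈ (driftTail n D p)ᶜ, weightedDrift p (D i) + weightedDrift p (D k) := by
  have hn : 0 < n := by omega
  have hj0 := jDp_pos (D := D) (p := p) hn
  refine ⟨⟨jDp n D p - 1, by omega⟩, fun i => ?_, ?_⟩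
  · simp only [mem_driftTail, Fin.le_def]
    omega
  · rw [sum_compl_driftTail hn, ← driftPartialSum_succ, Nat.sub_add_cancel hj0]
    exact driftPartialSum_jDp_pos hj

theorem driftTail_of_jDp_eq (hj : jDp n D p = n) (hn : 0 < n) :
    driftTail n D p = {⟨n - 1, by omega⟩} := by
  ext i
  simp only [mem_driftTail, mem_singleton, Fin.ext_iff]
  omega

theorem drift_pos_of_mem_driftTail (hD : Monotone D) (hp : 0 ≤ p) (hj : jDp n D p < n)
    {i : Fin n} (hi : i ∈ driftTail n D p) : 0 < drift p (D i) := by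
  obtain ⟨k, hk, hpos⟩ := exists_pivot hj
  have hneg := sum_weightedDrift_compl_driftTail_nonpos (D := D) (p := p) (by omega)
  have hfk : 0 < drift p (D k) :=
    drift_pos_of_weightedDrift_pos (Nat.cast_nonneg _) (by linarith)
  exact hfk.trans_le (drift_mono hp (Nat.cast_le.mpr (hD ((hk i).mp hi))))

theorem drift_nonneg_of_mem_driftTail (hD : Monotone D) (hp : 0 ≤ p) {k i : Fin n}
    (hk : 0 ≤ drift p (D k)) (hi : i ∈ driftTail n D p) : 0 ≤ drift p (D i) := by
  rcases jDp_le.lt_or_eq with hj | hj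
  · exact (drift_pos_of_mem_driftTail hD hp hj hi).le
  · have hki : k ≤ i := by
      rw [mem_driftTail] at hi
      rw [Fin.le_def]
      omega
    exact hk.trans (drift_mono hp (Nat.cast_le.mpr (hD hki)))

theorem drift_le_RDp (hD : Monotone D) (hp : 0 ≤ p) (i : Fin n) : drift p (D i) ≤ RDp n D p := by
  have hn : 0 < n := i.pos
  set last : Fin n := ⟨n - 1, by omega⟩
  have hi : drift p (D i) ≤ drift p (D last) :=
    drift_mono hp (Nat.cast_le.mpr (hD (Fin.le_def.mpr (show (i : ℕ) ≤ n - 1 by omega))))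
  refine hi.trans ?_
  rw [RDp_eq_sum_driftTail]
  rcases jDp_le.lt_or_eq with hj | hj
  · exact single_le_sum (fun k hk => (drift_pos_of_mem_driftTail hD hp hj hk).le)
      (mem_driftTail.mpr (show jDp n D p ≤ n - 1 + 1 by omega))
  · rw [driftTail_of_jDp_eq hj hn, sum_singleton]

end DegreeSequence

section Deletion

variable {n : ℕ} (G : SimpleGraph (Fin n)) (S : Finset (Fin n)) {D : Fin n → ℕ}

def deletionCharge (D : Fin n → ℕ) (v : Fin n) : ℝ :=
  if v ∈ S then (D v : ℝ) else D v - degDel G S v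

theorem degDel_add_card_adj_mem (v : Fin n) :
    degDel G S v + #{w | G.Adj v w ∧ w ∈ S} = G.degree v := by
  rw [← G.card_neighborFinset_eq_degree, G.neighborFinset_eq_filter, degDel,
    ← card_filter_add_card_filter_not (s := univ.filter (G.Adj v)) (fun w => w ∉ S)]
  simp [filter_filter]

theorem sum_card_adj_mem : ∑ v, #{w | G.Adj v w ∧ w ∈ S} = ∑ w ∈ S, G.degree w := by
  have := sum_card_bipartiteAbove_eq_sum_card_bipartiteBelow G.Adj (s := univ) (t := S)
  simp only [bipartiteAbove, bipartiteBelow] at this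
  convert this using 2 with v _ w _
  · congr 1; ext; simp [and_comm]
  · rw [← G.card_neighborFinset_eq_degree, G.neighborFinset_eq_filter]
    congr 1; ext; simp [G.adj_comm]

variable {G S}

theorem degDel_le (hG : ∀ v, G.degree v = D v) (v : Fin n) : degDel G S v ≤ D v := by
  rw [← hG, ← degDel_add_card_adj_mem G S v]
  exact Nat.le_add_right _ _

theorem sub_degDel_le_deletionCharge (v : Fin n) :
    (D v : ℝ) - degDel G S v ≤ deletionCharge G S D v := by
  unfold deletionCharge
  split_ifs
  · simp
  · rfl

theorem le_deletionCharge {v : Fin n} (hv : v ∈ S ∨ degDel G S v = 0) :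
    (D v : ℝ) ≤ deletionCharge G S D v := by
  unfold deletionCharge
  split_ifs with hS
  · rfl
  · simp [hv.resolve_left hS]

theorem deletionCharge_nonneg (hG : ∀ v, G.degree v = D v) (v : Fin n) :
    0 ≤ deletionCharge G S D v := by
  unfold deletionCharge
  split_ifs
  · positivity
  · exact sub_nonneg.mpr (Nat.cast_le.mpr (degDel_le hG v))

theorem sum_deletionCharge_le (hG : ∀ v, G.degree v = D v) :
    ∑ v, deletionCharge G S D v ≤ 2 * ∑ v ∈ S, (D v : ℝ) := by
  have hloss : ∀ v, (D v : ℝ) - degDel G S v = #{w | G.Adj v w ∧ w ∈ S} := fun v => by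
    rw [← hG, ← degDel_add_card_adj_mem G S v]
    push_cast; ring
  have hcount : ∑ v, (#{w | G.Adj v w ∧ w ∈ S} : ℝ) = ∑ v ∈ S, (D v : ℝ) := by
    simp only [← hG]
    exact_mod_cast sum_card_adj_mem G S
  calc ∑ v, deletionCharge G S D v
      = ∑ v ∈ S, (D v : ℝ) + ∑ v ∈ Sᶜ, ((D v : ℝ) - degDel G S v) := by
        rw [← sum_add_sum_compl S]
        congr 1
        · exact sum_congr rfl fun v hv => if_pos hv
        · exact sum_congr rfl fun v hv => if_neg (mem_compl.mp hv)
    _ ≤ ∑ v ∈ S, (D v : ℝ) + ∑ v, ((D v : ℝ) - degDel G S v) := by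
        gcongr
        · exact fun v _ _ => sub_nonneg.mpr (Nat.cast_le.mpr (degDel_le hG v))
        · exact subset_univ _
    _ = 2 * ∑ v ∈ S, (D v : ℝ) := by simp only [hloss, hcount]; ring

theorem card_le_card_survivors_add_sum_deletionCharge (hG : ∀ v, G.degree v = D v)
    (hD1 : ∀ v, 1 ≤ D v) :
    (n : ℝ) ≤ Fintype.card {v // v ∉ S ∧ degDel G S v ≠ 0} + ∑ v, deletionCharge G S D v := by
  have hsplit := card_filter_add_card_filter_not (s := univ)
    (fun v : Fin n => v ∉ S ∧ degDel G S v ≠ 0)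
  rw [card_univ, Fintype.card_fin] at hsplit
  have hdead : (#{v | ¬(v ∉ S ∧ degDel G S v ≠ 0)} : ℝ) ≤ ∑ v, deletionCharge G S D v := by
    rw [card_eq_sum_ones, Nat.cast_sum]
    refine (sum_le_sum fun v hv => ?_).trans
      (sum_le_sum_of_subset_of_nonneg (subset_univ _) fun v _ _ => deletionCharge_nonneg hG v)
    have hv : v ∈ S ∨ degDel G S v = 0 := by
      rw [mem_filter] at hv; tauto
    exact le_trans (by exact_mod_cast hD1 v) (le_deletionCharge hv)
  have hn : (n : ℝ) = #{v | v ∉ S ∧ degDel G S v ≠ 0} + #{v | ¬(v ∉ S ∧ degDel G S v ≠ 0)} := by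
    exact_mod_cast hsplit.symm
  rw [Fintype.card_subtype]
  linarith

theorem drift_le_deletionCharge_add (hG : ∀ v, G.degree v = D v) {p M : ℝ} (hp : 0 ≤ p)
    (hp1 : p ≤ 1) (hM : 0 ≤ M)
    (hsurv : ∀ v, v ∉ S → degDel G S v ≠ 0 → drift p (degDel G S v) ≤ M) (v : Fin n) :
    drift p (D v) ≤ deletionCharge G S D v + M := by
  by_cases hv : v ∈ S ∨ degDel G S v = 0
  · exact (drift_le_self hp hp1 (Nat.cast_nonneg _)).trans
      ((le_deletionCharge hv).trans (le_add_of_nonneg_right hM))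
  rw [not_or] at hv
  calc drift p (D v) ≤ drift p (degDel G S v) + ((D v : ℝ) - degDel G S v) :=
        drift_le_drift_add hp1 (Nat.cast_le.mpr (degDel_le hG v))
    _ ≤ M + deletionCharge G S D v :=
        add_le_add (hsurv v hv.1 hv.2) (sub_degDel_le_deletionCharge v)
    _ = deletionCharge G S D v + M := add_comm _ _

end Deletion

section Survivors

variable {n n' : ℕ} {G : SimpleGraph (Fin n)} {S : Finset (Fin n)} {D : Fin n → ℕ}
  {D' : Fin n' → ℕ} {p : ℝ}

theorem exists_survivor_drift_pos (hG : ∀ v, G.degree v = D v) (hp : 0 ≤ p) (hp1 : p ≤ 1)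
    (σ : Fin n' ≃ {v : Fin n // v ∉ S ∧ degDel G S v ≠ 0}) (hσ : ∀ i, D' i = degDel G S (σ i))
    (hR : ∑ v, deletionCharge G S D v < RDp n D p) : ∃ i, 0 < drift p (D' i) := by
  by_contra! hneg
  have hsurv : ∀ v, v ∉ S → degDel G S v ≠ 0 → drift p (degDel G S v) ≤ 0 := fun v hv h0 => by
    simpa [hσ] using hneg (σ.symm ⟨v, hv, h0⟩)
  have hdrift := drift_le_deletionCharge_add hG hp hp1 le_rfl hsurv
  have : RDp n D p ≤ ∑ v, deletionCharge G S D v :=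
    calc RDp n D p = ∑ v ∈ driftTail n D p, drift p (D v) := RDp_eq_sum_driftTail
      _ ≤ ∑ v ∈ driftTail n D p, deletionCharge G S D v :=
          sum_le_sum fun v _ => by simpa using hdrift v
      _ ≤ _ := sum_le_sum_of_subset_of_nonneg (subset_univ _)
          fun v _ _ => deletionCharge_nonneg hG v
  linarith

theorem drift_degDel_le_RDp (hD' : Monotone D') (hp : 0 ≤ p)
    (σ : Fin n' ≃ {v : Fin n // v ∉ S ∧ degDel G S v ≠ 0}) (hσ : ∀ i, D' i = degDel G S (σ i))
    {v : Fin n} (hv : v ∉ S) (h0 : degDel G S v ≠ 0) :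
    drift p (degDel G S v) ≤ RDp n' D' p := by
  simpa [hσ] using drift_le_RDp hD' hp (σ.symm ⟨v, hv, h0⟩)

theorem RDp_le_pivot_of_deletion (hG : ∀ v, G.degree v = D v) (hD : Monotone D)
    (hD1 : ∀ v, 1 ≤ D v) (hp : 0 ≤ p) (hp1 : p ≤ 1) (hD' : Monotone D')
    (σ : Fin n' ≃ {v : Fin n // v ∉ S ∧ degDel G S v ≠ 0}) (hσ : ∀ i, D' i = degDel G S (σ i))
    {k' : Fin n'} (hk' : 0 ≤ drift p (D' k')) (hj : jDp n D p < n) :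
    ∃ k, RDp n D p ≤
      2 * RDp n' D' p + 2 * drift p (D k) + 5 * ∑ v, deletionCharge G S D v := by
  obtain ⟨k, hk, hold⟩ := exists_pivot hj
  set e : Fin n' ↪ Fin n := σ.toEmbedding.trans (Function.Embedding.subtype _)
  have he : ∀ i, degDel G S (e i) = D' i := fun i => (hσ i).symm
  have hcore := sum_drift_le_of_charge (d := fun v => (D v : ℝ))
    (d' := fun v => (degDel G S v : ℝ)) (c := deletionCharge G S D) (T := driftTail n D p)
    (A := (driftTail n' D' p)ᶜ.map e) (O := (driftTail n' D' p).map e) hp hp1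
    (by exact_mod_cast hD1 k) (fun v => Nat.cast_nonneg _)
    (fun v => Nat.cast_le.mpr (degDel_le hG v)) sub_degDel_le_deletionCharge ?dead
    (fun v hv => ⟨Nat.cast_le.mpr (hD ((hk v).mp hv)), drift_pos_of_mem_driftTail hD hp hj hv⟩)
    (fun v hv => Nat.cast_le.mpr (hD (le_of_lt (not_le.mp ((hk v).not.mp hv)))))
    ?newTail hold ?newPrefix
  · rw [sum_map] at hcore
    simp only [he, ← RDp_eq_sum_driftTail] at hcore
    exact ⟨k, hcore⟩
  case dead =>
    intro v hA hO
    refine le_deletionCharge (or_iff_not_and_not.mpr fun hv => ?_)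
    obtain ⟨i, rfl⟩ : ∃ i, e i = v := ⟨σ.symm ⟨v, hv.1, hv.2⟩, by simp [e]⟩
    by_cases hi : i ∈ driftTail n' D' p
    · exact hO (mem_map_of_mem e hi)
    · exact hA (mem_map_of_mem e (mem_compl.mpr hi))
  case newTail =>
    simp only [mem_map]
    rintro _ ⟨i, hi, rfl⟩
    rw [he]
    exact drift_nonneg_of_mem_driftTail hD' hp hk' hi
  case newPrefix =>
    rw [sum_map]
    simp only [he]
    exact sum_weightedDrift_compl_driftTail_nonpos k'.pos

theorem RDp_le_of_deletion (hG : ∀ v, G.degree v = D v) (hD : Monotone D) (hD1 : ∀ v, 1 ≤ D v)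
    (hp : 0 ≤ p) (hp1 : p ≤ 1) (hD' : Monotone D')
    (σ : Fin n' ≃ {v : Fin n // v ∉ S ∧ degDel G S v ≠ 0}) (hσ : ∀ i, D' i = degDel G S (σ i))
    {k' : Fin n'} (hk' : 0 ≤ drift p (D' k')) :
    RDp n D p ≤ 4 * RDp n' D' p + 7 * ∑ v, deletionCharge G S D v := by
  set C := ∑ v, deletionCharge G S D v
  have hR' : 0 ≤ RDp n' D' p := hk'.trans (drift_le_RDp hD' hp k')
  have hC : ∀ v, 0 ≤ deletionCharge G S D v ∧ deletionCharge G S D v ≤ C := fun v =>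
    ⟨deletionCharge_nonneg hG v, single_le_sum (fun w _ => deletionCharge_nonneg hG w) (mem_univ v)⟩
  have hdrift : ∀ v, drift p (D v) ≤ RDp n' D' p + C := fun v =>
    (drift_le_deletionCharge_add hG hp hp1 hR'
      (fun u hu h0 => drift_degDel_le_RDp hD' hp σ hσ hu h0) v).trans (by linarith [hC v])
  rcases jDp_le.lt_or_eq with hj | hj
  · obtain ⟨k, hk⟩ := RDp_le_pivot_of_deletion hG hD hD1 hp hp1 hD' σ hσ hk' hj
    linarith [hdrift k, hC k]
  · have hn : 0 < n := (σ k').1.pos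
    set last : Fin n := ⟨n - 1, by omega⟩
    rw [RDp_eq_sum_driftTail, driftTail_of_jDp_eq hj hn, sum_singleton]
    linarith [hdrift last, hC last]

end Survivors

/-- **Proposition (stability of `R^D_p` under deletion of vertices of small total degree).**
If `R^D_p ≥ μn`, `Σ_{v∈S} d(v) ≤ νn` with `400ν ≤ μ ≤ 1`, `G` realises `D`, and `D'` (of
length `n'`) is the degree sequence of the graph `G'` obtained from `G` by deleting the
vertices of `S` and then all isolated vertices, then `n' ≥ (1-2ν)n` and
`R^{D'}_p ≥ (μ/50)·n'`. -/
theorem RDp_stable_under_deletion :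
    ∀ ν : ℝ, 0 < ν → ν ≤ 1 →
    ∃ n₀ : ℕ, ∀ n : ℕ, n₀ ≤ n →
    ∀ μ : ℝ, 400 * ν ≤ μ → μ ≤ 1 →
    ∀ p : ℝ, 0 < p → p ≤ 1 →
    ∀ D : Fin n → ℕ, Monotone D → (∀ i, 1 ≤ D i) →
    μ * n ≤ RDp n D p →
    ∀ S : Finset (Fin n), (∑ v ∈ S, (D v : ℝ)) ≤ ν * n →
    ∀ G : SimpleGraph (Fin n), (∀ v, G.degree v = D v) →
    -- `D'`, of length `n'`, is the (sorted) degree sequence of the graph `G'` obtained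
    -- from `G` by deleting the vertices of `S` and then all vertices of degree `0`:
    -- its entries are the degrees (in `G - S`) of the surviving vertices.
    ∀ (n' : ℕ) (D' : Fin n' → ℕ), Monotone D' →
    ∀ σ : Fin n' ≃ {v : Fin n // v ∉ S ∧ degDel G S v ≠ 0},
    (∀ i, D' i = degDel G S (σ i)) →
    (1 - 2 * ν) * n ≤ n' ∧ μ / 50 * n' ≤ RDp n' D' p := by
  intro ν hν _
  refine ⟨1, fun n hn μ hμ _ p hp hp1 D hD hD1 hR S hS G hG n' D' hD' σ hσ => ?_⟩
  set C := ∑ v, deletionCharge G S D v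
  have hC : C ≤ 2 * (ν * n) := (sum_deletionCharge_le hG).trans (by linarith)
  have hcard : (n : ℝ) ≤ n' + C := by
    have := card_le_card_survivors_add_sum_deletionCharge (S := S) hG hD1
    rwa [← Fintype.card_congr σ, Fintype.card_fin] at this
  have hn' : (n' : ℝ) ≤ n := by
    exact_mod_cast Fin.le_of_embedding (σ.toEmbedding.trans (Function.Embedding.subtype _))
  have hνn : 0 < ν * n := mul_pos hν (by exact_mod_cast hn)
  have hμn : 400 * (ν * n) ≤ μ * n := by nlinarith
  obtain ⟨k', hk'⟩ := exists_survivor_drift_pos hG hp.le hp1 σ hσ (by linarith)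
  have hRR' := RDp_le_of_deletion hG hD hD1 hp.le hp1 hD' σ hσ hk'.le
  refine ⟨by linarith, ?_⟩
  calc μ / 50 * n' ≤ μ / 50 * n := by gcongr; linarith
    _ ≤ RDp n' D' p := by linarith
end
end

section
/- There exists n₀ ∈ ℕ such that the following holds for every n ≥ n₀. Let V = [n], let Z′ ⊆ V, let H′ be a graph with vertex set Z′, and let F′ be a bipartite graph with vertex partition (Z′, V∖Z′). Let u ∈ V and v ∈ V∖Z′ with uv ∉ E(F′). Let D be a feasible degree sequence on V such that (E1) d(u) ≤ n^{1/4}; (E2) every w ∈ V with d(w) > n^{1/4} satisfies w ∈ Z′ and d(w) = d_{H′}(w); and (E3) Σ_{w∈V∖Z′} (d(w) − d_{F′}(w)) ≥ n/20. If the event {G^D[Z′] = H′ and F′ ⊆ G^D} has positive probability, then P[uv ∈ E(G^D) | G^D[Z′] = H′, F′ ⊆ G^D] ≤ 40·n^{−1/2}. -/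
open Finset

noncomputable section
open scoped Classical

/-- The finset of all simple graphs on `Fin n` realising the degree sequence `D`
(vertex `v` has degree `D v`). -/
def graphsWithDegreeSeq (n : ℕ) (D : Fin n → ℕ) : Finset (SimpleGraph (Fin n)) :=
  Finset.univ.filter (fun G => ∀ v, G.degree v = D v)

/-- Conditional probability `P[A | B]` under the uniform distribution on simple graphs
with degree sequence `D`. -/
def uniformCondProb (n : ℕ) (D : Fin n → ℕ) (A B : SimpleGraph (Fin n) → Prop) : ℝ :=
  (((graphsWithDegreeSeq n D).filter (fun G => A G ∧ B G)).card : ℝ) /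
    (((graphsWithDegreeSeq n D).filter B).card : ℝ)

/-!
Switching. Take `G` in the conditioned space with `uv ∈ G`, and an edge `xy` of `G - F'` with
`x ∉ Z'`, `ux, vy ∉ G`; replacing `uv, xy` by `ux, vy` keeps every degree, keeps `G[Z'] = H'`
and `F' ⊆ G` (each of the four pairs meets `V ∖ Z'`, and `uv, xy ∉ F'`), and `G` is recovered
from the result and `(x, y)`. By (E2) every vertex outside `Z'` has degree at most `n^{1/4}`, and
every vertex has at most `n^{1/4}` neighbours outside `Z'` (a vertex of larger degree has all its
edges in `H'`). So of the at least `n/20` edges `xy` counted by (E3), at most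
`2 (n^{1/4} + 1) n^{1/4} ≤ n/40` are spoiled by `x ∈ N[u]` or `y ∈ N[v]`, while a switched graph
`G'` arises from at most `d(u) d(v) ≤ n^{1/2}` pairs `x ∈ N_{G'}(u)`, `y ∈ N_{G'}(v)`.
Double counting gives `P[uv ∈ G | ·] · n/40 ≤ n^{1/2}`.
-/

theorem Finset.card_mul_le_card_mul_of_injOn {α ι R : Type*} [CommSemiring R] [PartialOrder R]
    [IsOrderedRing R] {A B : Finset α} {P Q : α → Finset ι} {f : α → ι → α} {m M : R}
    (hf : ∀ a ∈ A, ∀ i ∈ P a, f a i ∈ B ∧ i ∈ Q (f a i))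
    (hinj : ∀ a ∈ A, ∀ b ∈ A, ∀ i ∈ P a, i ∈ P b → f a i = f b i → a = b)
    (hP : ∀ a ∈ A, m ≤ #(P a)) (hQ : ∀ b ∈ B, (#(Q b) : R) ≤ M) :
    #A * m ≤ #B * M := by
  have hsigma : #(A.sigma P) ≤ #(B.sigma Q) := by
    refine card_le_card_of_injOn (fun p => ⟨f p.1 p.2, p.2⟩) (fun p hp => ?_) ?_
    · rw [mem_coe, mem_sigma] at hp ⊢
      exact hf _ hp.1 _ hp.2
    · rintro ⟨a, i⟩ hp ⟨b, j⟩ hq h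
      rw [mem_coe, mem_sigma] at hp hq
      simp only [Sigma.mk.injEq, heq_eq_eq] at h
      obtain ⟨hab, rfl⟩ := h
      rw [hinj a hp.1 b hq.1 i hp.2 hq.2 hab]
  calc (#A : R) * m = ∑ a ∈ A, m := by rw [sum_const, nsmul_eq_mul]
    _ ≤ ∑ a ∈ A, (#(P a) : R) := sum_le_sum hP
    _ ≤ ∑ b ∈ B, (#(Q b) : R) := by
      simpa only [card_sigma, Nat.cast_sum] using Nat.mono_cast (α := R) hsigma
    _ ≤ ∑ b ∈ B, M := sum_le_sum hQ
    _ = #B * M := by rw [sum_const, nsmul_eq_mul]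

theorem Finset.card_filter_mem_le {α β : Type*} [DecidableEq β] {s : Finset α} {t : Finset β}
    (f : α → β) {k : ℕ} (h : ∀ b ∈ t, #{a ∈ s | f a = b} ≤ k) : #{a ∈ s | f a ∈ t} ≤ #t * k := by
  rw [mul_comm]
  refine card_le_mul_card_image_of_maps_to (fun a ha => (mem_filter.1 ha).2) k fun b hb => ?_
  refine (card_le_card fun a ha => ?_).trans (h b hb)
  simp only [mem_filter] at ha ⊢
  exact ⟨ha.1.1, ha.2⟩

namespace SimpleGraph

variable {V : Type*} (G : SimpleGraph V) (u v x y : V)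

def switch : SimpleGraph V :=
  fromEdgeSet ((G.edgeSet \ {s(u, v), s(x, y)}) ∪ {s(u, x), s(v, y)})

variable {G u v x y}

lemma switch_adj {a b : V} : (G.switch u v x y).Adj a b ↔
    ((G.Adj a b ∧ s(a, b) ≠ s(u, v) ∧ s(a, b) ≠ s(x, y)) ∨
      s(a, b) = s(u, x) ∨ s(a, b) = s(v, y)) ∧ a ≠ b := by
  simp only [switch, fromEdgeSet_adj, Set.mem_union, Set.mem_sdiff, Set.mem_insert_iff,
    Set.mem_singleton_iff, mem_edgeSet, not_or]

lemma switch_comm : G.switch u v x y = G.switch x y u v := by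
  rw [switch, switch, Set.pair_comm s(x, y), Sym2.eq_swap (a := x) (b := u),
    Sym2.eq_swap (a := y) (b := v)]

lemma switch_swap : G.switch u v x y = G.switch v u y x := by
  rw [switch, switch, Sym2.eq_swap (a := v) (b := u), Sym2.eq_swap (a := y) (b := x),
    Set.pair_comm s(v, y)]

lemma switch_adj_of_notMem {a b : V}
    (hab : s(a, b) ∉ ({s(u, v), s(x, y), s(u, x), s(v, y)} : Set _)) :
    (G.switch u v x y).Adj a b ↔ G.Adj a b := by
  simp only [Set.mem_insert_iff, Set.mem_singleton_iff, not_or] at hab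
  rw [switch_adj]
  exact ⟨fun h => by tauto, fun h => ⟨Or.inl ⟨h, hab.1, hab.2.1⟩, h.ne⟩⟩

lemma switch_switch (huv : G.Adj u v) (hxy : G.Adj x y) (hux : ¬G.Adj u x)
    (hvy : ¬G.Adj v y) : (G.switch u v x y).switch u x v y = G := by
  rw [← edgeSet_inj]
  ext e
  have huv' : s(u, v) ∈ G.edgeSet := huv
  have hxy' : s(x, y) ∈ G.edgeSet := hxy
  have hux' : s(u, x) ∉ G.edgeSet := hux
  have hvy' : s(v, y) ∉ G.edgeSet := hvy
  have hdiag : ∀ e ∈ G.edgeSet, ¬e.IsDiag := fun e => G.not_isDiag_of_mem_edgeSet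
  simp only [switch, edgeSet_fromEdgeSet, Set.mem_sdiff, Set.mem_union, Set.mem_insert_iff,
    Set.mem_singleton_iff, Sym2.mem_diagSet]
  grind

variable [Fintype V]

lemma neighborFinset_switch_left (huv : G.Adj u v) (hxy : G.Adj x y) (hux : ¬G.Adj u x)
    (hux' : u ≠ x) :
    (G.switch u v x y).neighborFinset u = insert x ((G.neighborFinset u).erase v) := by
  have hne := huv.ne
  have hyx := hxy.symm
  ext b
  simp only [mem_neighborFinset, mem_insert, mem_erase, switch_adj, Sym2.eq_iff]
  grind [Adj.ne]

lemma degree_switch_left (huv : G.Adj u v) (hxy : G.Adj x y) (hux : ¬G.Adj u x)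
    (hux' : u ≠ x) : (G.switch u v x y).degree u = G.degree u := by
  rw [← card_neighborFinset_eq_degree, neighborFinset_switch_left huv hxy hux hux',
    card_insert_of_notMem (by simp [hux]), card_erase_of_mem (by simpa using huv),
    card_neighborFinset_eq_degree, Nat.sub_add_cancel]
  exact (G.degree_pos_iff_exists_adj u).2 ⟨v, huv⟩

lemma degree_switch (huv : G.Adj u v) (hxy : G.Adj x y) (hux : ¬G.Adj u x)
    (hvy : ¬G.Adj v y) (hux' : u ≠ x) (hvy' : v ≠ y) (w : V) :
    (G.switch u v x y).degree w = G.degree w := by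
  by_cases hw : w = u ∨ w = v ∨ w = x ∨ w = y
  · rcases hw with rfl | rfl | rfl | rfl
    · exact degree_switch_left huv hxy hux hux'
    · rw [switch_swap]
      exact degree_switch_left huv.symm hxy.symm hvy hvy'
    · rw [switch_comm]
      exact degree_switch_left hxy huv (fun h => hux h.symm) hux'.symm
    · rw [switch_comm, switch_swap]
      exact degree_switch_left hxy.symm huv.symm (fun h => hvy h.symm) hvy'.symm
  · rw [← card_neighborFinset_eq_degree, ← card_neighborFinset_eq_degree]
    congr 1
    ext b
    simp only [mem_neighborFinset]
    apply switch_adj_of_notMem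
    simp only [Set.mem_insert_iff, Set.mem_singleton_iff, Sym2.eq_iff]
    tauto

end SimpleGraph

section Completion

open SimpleGraph

variable {V : Type*} [Fintype V] [DecidableEq V] {Z : Finset V} {H F G : SimpleGraph V}
  {u v x y : V} {k : ℕ}

def IsCompletion (Z : Finset V) (H F G : SimpleGraph V) : Prop :=
  (∀ a b, a ∈ Z → b ∈ Z → (G.Adj a b ↔ H.Adj a b)) ∧ F ≤ G

def outerFreeArcs (Z : Finset V) (F G : SimpleGraph V) : Finset (V × V) :=
  {p | p.1 ∉ Z ∧ G.Adj p.1 p.2 ∧ ¬F.Adj p.1 p.2}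

def switchPairs (Z : Finset V) (F G : SimpleGraph V) (u v : V) : Finset (V × V) :=
  {p ∈ outerFreeArcs Z F G |
    p.1 ∉ insert u (G.neighborFinset u) ∧ p.2 ∉ insert v (G.neighborFinset v)}

lemma mem_switchPairs : (x, y) ∈ switchPairs Z F G u v ↔
    (x ∉ Z ∧ G.Adj x y ∧ ¬F.Adj x y) ∧ (x ≠ u ∧ ¬G.Adj u x) ∧ (y ≠ v ∧ ¬G.Adj v y) := by
  simp [switchPairs, outerFreeArcs]

lemma degree_switch_of_mem_switchPairs (huv : G.Adj u v) (hp : (x, y) ∈ switchPairs Z F G u v)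
    (w : V) : (G.switch u v x y).degree w = G.degree w := by
  obtain ⟨⟨-, hxy, -⟩, ⟨hxu, hux⟩, ⟨hyv, hvy⟩⟩ := mem_switchPairs.1 hp
  exact degree_switch huv hxy hux hvy hxu.symm hyv.symm w

lemma switch_switch_of_mem_switchPairs (huv : G.Adj u v) (hp : (x, y) ∈ switchPairs Z F G u v) :
    (G.switch u v x y).switch u x v y = G := by
  obtain ⟨⟨-, hxy, -⟩, ⟨-, hux⟩, ⟨-, hvy⟩⟩ := mem_switchPairs.1 hp
  exact switch_switch huv hxy hux hvy

lemma card_outerFreeArcs (hFG : F ≤ G) :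
    #(outerFreeArcs Z F G) = ∑ x ∈ univ.filter (· ∉ Z), (G.degree x - F.degree x) := by
  rw [card_eq_sum_card_fiberwise (f := Prod.fst) (t := univ.filter (· ∉ Z))
    (fun p hp => by simp_all [outerFreeArcs])]
  refine sum_congr rfl fun x hx => ?_
  have hfiber : {p ∈ outerFreeArcs Z F G | p.1 = x} =
      (G.neighborFinset x \ F.neighborFinset x).map ⟨(x, ·), Prod.mk_right_injective x⟩ := by
    ext ⟨a, b⟩
    simp only [outerFreeArcs, mem_filter, mem_univ, true_and, mem_map, mem_sdiff,
      mem_neighborFinset, Function.Embedding.coeFn_mk, Prod.mk.injEq] at hx ⊢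
    grind
  rw [hfiber, card_map, card_sdiff_of_subset fun b hb => by simpa using hFG (by simpa using hb),
    card_neighborFinset_eq_degree, card_neighborFinset_eq_degree]

lemma card_outerFreeArcs_fst_le (hk : ∀ x ∉ Z, G.degree x ≤ k) (x : V) :
    #{p ∈ outerFreeArcs Z F G | p.1 = x} ≤ k := by
  by_cases hx : x ∈ Z
  · rw [filter_eq_empty_iff.2 fun p hp h => by simp_all [outerFreeArcs]]
    exact Nat.zero_le k
  · refine le_trans ?_ ((card_neighborFinset_eq_degree G x).trans_le (hk x hx))
    refine card_le_card_of_injOn Prod.snd (fun p hp => ?_) fun p hp q hq h => ?_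
    · rw [mem_coe, mem_filter, outerFreeArcs, mem_filter] at hp
      rw [mem_coe, mem_neighborFinset, ← hp.2]
      exact hp.1.2.2.1
    · rw [mem_coe, mem_filter] at hp hq
      exact Prod.ext (hp.2.trans hq.2.symm) h

lemma card_outerFreeArcs_snd_le (hk : ∀ y, #{x ∈ G.neighborFinset y | x ∉ Z} ≤ k) (y : V) :
    #{p ∈ outerFreeArcs Z F G | p.2 = y} ≤ k := by
  refine le_trans (card_le_card_of_injOn Prod.fst (fun p hp => ?_) fun p hp q hq h => ?_) (hk y)
  · rw [mem_coe, mem_filter, outerFreeArcs, mem_filter] at hp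
    simp [hp.1.2.1, ← hp.2, hp.1.2.2.1.symm]
  · rw [mem_coe, mem_filter] at hp hq
    exact Prod.ext h (hp.2.trans hq.2.symm)

lemma card_outerFreeArcs_le (hk₁ : ∀ x ∉ Z, G.degree x ≤ k)
    (hk₂ : ∀ y, #{x ∈ G.neighborFinset y | x ∉ Z} ≤ k) :
    #(outerFreeArcs Z F G) ≤
      #(switchPairs Z F G u v) + (G.degree u + 1) * k + (G.degree v + 1) * k := by
  set S := insert u (G.neighborFinset u)
  set T := insert v (G.neighborFinset v)
  have hS : #S ≤ G.degree u + 1 :=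
    (card_insert_le _ _).trans_eq (by rw [card_neighborFinset_eq_degree])
  have hT : #T ≤ G.degree v + 1 :=
    (card_insert_le _ _).trans_eq (by rw [card_neighborFinset_eq_degree])
  have hcover : outerFreeArcs Z F G ⊆ switchPairs Z F G u v ∪
      {p ∈ outerFreeArcs Z F G | p.1 ∈ S} ∪ {p ∈ outerFreeArcs Z F G | p.2 ∈ T} := by
    intro p hp
    simp only [switchPairs, mem_union, mem_filter]
    tauto
  calc #(outerFreeArcs Z F G)
      ≤ #(switchPairs Z F G u v) + #{p ∈ outerFreeArcs Z F G | p.1 ∈ S} +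
          #{p ∈ outerFreeArcs Z F G | p.2 ∈ T} :=
        (card_le_card hcover).trans ((card_union_le _ _).trans (by grw [card_union_le]))
    _ ≤ #(switchPairs Z F G u v) + #S * k + #T * k := by
        grw [Finset.card_filter_mem_le _ fun b _ => card_outerFreeArcs_fst_le hk₁ b,
          Finset.card_filter_mem_le _ fun b _ => card_outerFreeArcs_snd_le hk₂ b]
    _ ≤ _ := by grw [hS, hT]

lemma card_neighborFinset_filter_notMem_le (hH : ∀ a b, H.Adj a b → b ∈ Z) (hHG : H ≤ G)
    (hbig : ∀ w, k < G.degree w → H.degree w = G.degree w) (y : V) :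
    #{x ∈ G.neighborFinset y | x ∉ Z} ≤ k := by
  by_cases hy : G.degree y ≤ k
  · rw [← card_neighborFinset_eq_degree] at hy
    exact (card_le_card (filter_subset _ _)).trans hy
  · have hin : H.neighborFinset y ⊆ {x ∈ G.neighborFinset y | x ∈ Z} := fun b hb => by
      rw [mem_neighborFinset] at hb
      simpa using ⟨hHG hb, hH y b hb⟩
    have hsplit := card_filter_add_card_filter_not (s := G.neighborFinset y) (· ∈ Z)
    have := card_le_card hin
    rw [card_neighborFinset_eq_degree, hbig y (by omega)] at this
    rw [card_neighborFinset_eq_degree] at hsplit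
    omega

lemma IsCompletion.switch (hG : IsCompletion Z H F G) (hv : v ∉ Z) (hFuv : ¬F.Adj u v)
    (hp : (x, y) ∈ switchPairs Z F G u v) : IsCompletion Z H F (G.switch u v x y) := by
  obtain ⟨⟨hx, hxy, hFxy⟩, -, -⟩ := mem_switchPairs.1 hp
  constructor
  · intro a b ha hb
    rw [switch_adj_of_notMem, hG.1 a b ha hb]
    have : a ≠ v ∧ b ≠ v ∧ a ≠ x ∧ b ≠ x := by
      refine ⟨?_, ?_, ?_, ?_⟩ <;> rintro rfl <;> contradiction
    simp only [Set.mem_insert_iff, Set.mem_singleton_iff, Sym2.eq_iff]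
    tauto
  · intro a b hab
    have hne : ∀ {c d}, ¬F.Adj c d → s(a, b) ≠ s(c, d) := fun hcd h =>
      hcd (by rw [← mem_edgeSet, ← h]; exact hab)
    exact switch_adj.2 ⟨Or.inl ⟨hG.2 hab, hne hFuv, hne hFxy⟩, hab.ne⟩

lemma le_card_switchPairs {D : V → ℕ} {K : ℝ} (hK : 20 ≤ K)
    (hH : ∀ a b, H.Adj a b → a ∈ Z ∧ b ∈ Z) (hG : IsCompletion Z H F G)
    (hdeg : ∀ w, G.degree w = D w) (hv : v ∉ Z) (hu : (D u : ℝ) ≤ K)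
    (hbig : ∀ w, K < D w → w ∈ Z ∧ H.degree w = D w)
    (hfree : K ^ 4 / 20 ≤ ∑ w ∈ univ.filter (fun w => w ∉ Z), ((D w : ℝ) - F.degree w)) :
    K ^ 4 / 40 ≤ #(switchPairs Z F G u v) := by
  have hK0 : 0 ≤ K := by linarith
  set k := ⌊K⌋₊
  have hkK : (k : ℝ) ≤ K := Nat.floor_le hK0
  have hbig' : ∀ w, k < G.degree w → w ∈ Z ∧ H.degree w = G.degree w := fun w hw => by
    rw [hdeg] at hw ⊢
    exact hbig w ((Nat.floor_lt hK0).1 hw)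
  have hk₁ : ∀ x ∉ Z, G.degree x ≤ k := fun x hx => not_lt.1 fun h => hx (hbig' x h).1
  have hHG : H ≤ G := fun a b h => (hG.1 a b (hH a b h).1 (hH a b h).2).2 h
  have hk₂ := card_neighborFinset_filter_notMem_le (fun a b h => (hH a b h).2) hHG
    (fun w h => (hbig' w h).2)
  have hu' : (G.degree u : ℝ) ≤ K := hdeg u ▸ hu
  have hv' : (G.degree v : ℝ) ≤ K := (Nat.cast_le.2 (hk₁ v hv)).trans hkK
  have harcs : K ^ 4 / 20 ≤ #(outerFreeArcs Z F G) := by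
    rw [card_outerFreeArcs hG.2, Nat.cast_sum]
    refine hfree.trans_eq (sum_congr rfl fun w _ => ?_)
    rw [Nat.cast_sub (degree_le_of_le hG.2), hdeg]
  have hcount : (#(outerFreeArcs Z F G) : ℝ) ≤
      #(switchPairs Z F G u v) + (G.degree u + 1) * k + (G.degree v + 1) * k := by
    exact_mod_cast card_outerFreeArcs_le (u := u) (v := v) hk₁ hk₂
  have hk0 : (0 : ℝ) ≤ k := Nat.cast_nonneg k
  have hbad_u : (G.degree u + 1 : ℝ) * k ≤ (K + 1) * K :=
    mul_le_mul (by linarith) hkK hk0 (by linarith)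
  have hbad_v : (G.degree v + 1 : ℝ) * k ≤ (K + 1) * K :=
    mul_le_mul (by linarith) hkK hk0 (by linarith)
  have hK2 : 400 ≤ K ^ 2 := by nlinarith
  have hsmall : 2 * ((K + 1) * K) ≤ K ^ 4 / 40 := by nlinarith
  linarith

end Completion

open SimpleGraph in
lemma uniformCondProb_adj_le {n : ℕ} {D : Fin n → ℕ} {Z : Finset (Fin n)}
    {H F : SimpleGraph (Fin n)} {u v : Fin n} (hv : v ∉ Z) (hFuv : ¬F.Adj u v) {m : ℝ}
    (hm : 0 < m) (hpairs : ∀ G ∈ graphsWithDegreeSeq n D, G.Adj u v → IsCompletion Z H F G →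
      m ≤ #(switchPairs Z F G u v)) :
    uniformCondProb n D (fun G => G.Adj u v) (IsCompletion Z H F) ≤ D u * D v / m := by
  have hdeg : ∀ {G}, G ∈ graphsWithDegreeSeq n D → ∀ w, G.degree w = D w := fun hG =>
    (mem_filter.1 hG).2
  have key := card_mul_le_card_mul_of_injOn (m := m) (M := ((D u * D v : ℕ) : ℝ))
    (A := {G ∈ graphsWithDegreeSeq n D | G.Adj u v ∧ IsCompletion Z H F G})
    (B := {G ∈ graphsWithDegreeSeq n D | IsCompletion Z H F G})
    (P := fun G => switchPairs Z F G u v)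
    (Q := fun G => G.neighborFinset u ×ˢ G.neighborFinset v)
    (f := fun G p => G.switch u v p.1 p.2) ?_ ?_ ?_ ?_
  · unfold uniformCondProb
    rcases (Nat.cast_nonneg (α := ℝ)
      #{G ∈ graphsWithDegreeSeq n D | IsCompletion Z H F G}).eq_or_lt with hB | hB
    · rw [← hB, div_zero]
      positivity
    · rw [div_le_div_iff₀ hB hm]
      push_cast at key
      linarith
  · rintro G hG ⟨x, y⟩ hp
    obtain ⟨hGD, huv, hGc⟩ := mem_filter.1 hG
    obtain ⟨-, ⟨hxu, -⟩, ⟨hyv, -⟩⟩ := mem_switchPairs.1 hp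
    refine ⟨mem_filter.2 ⟨mem_filter.2 ⟨mem_univ _, fun w => ?_⟩, hGc.switch hv hFuv hp⟩, ?_⟩
    · rw [degree_switch_of_mem_switchPairs huv hp, hdeg hGD]
    · simp [switch_adj, hxu.symm, hyv.symm]
  · rintro G hG G' hG' ⟨x, y⟩ hp hp' h
    rw [← switch_switch_of_mem_switchPairs (mem_filter.1 hG).2.1 hp,
      ← switch_switch_of_mem_switchPairs (mem_filter.1 hG').2.1 hp']
    exact congrArg (switch · u x v y) h
  · intro G hG
    obtain ⟨hGD, huv, hGc⟩ := mem_filter.1 hG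
    exact hpairs G hGD huv hGc
  · intro G hG
    rw [card_product, card_neighborFinset_eq_degree, card_neighborFinset_eq_degree,
      hdeg (mem_filter.1 hG).1, hdeg (mem_filter.1 hG).1]

/-- **Lemma (an edge is unlikely, conditionally).**
Conditional on `G^D[Z'] = H'` and `F' ⊆ G^D`, the probability that a fixed non-`F'` pair
`uv` (with `v ∉ Z'`) is an edge of `G^D` is at most `40 n^{-1/2}`, provided (E1) `u` has
small degree, (E2) all large-degree vertices lie in `Z'` with all their edges in `H'`,
and (E3) there are many free half-edges outside `Z'`. -/
theorem cond_prob_edge_small :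
    ∃ n₀ : ℕ, ∀ n : ℕ, n₀ ≤ n →
    ∀ Z' : Finset (Fin n), ∀ H' F' : SimpleGraph (Fin n),
    -- `H'` is a graph on the vertex set `Z'`
    (∀ a b, H'.Adj a b → a ∈ Z' ∧ b ∈ Z') →
    -- `F'` is bipartite with parts `(Z', V \ Z')`
    (∀ a b, F'.Adj a b → ((a ∈ Z' ∧ b ∉ Z') ∨ (a ∉ Z' ∧ b ∈ Z'))) →
    ∀ u v : Fin n, v ∉ Z' → ¬ F'.Adj u v →
    ∀ D : Fin n → ℕ, (∀ w, 1 ≤ D w) →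
    -- (E1)
    (D u : ℝ) ≤ (n : ℝ) ^ ((1 : ℝ) / 4) →
    -- (E2)
    (∀ w : Fin n, (n : ℝ) ^ ((1 : ℝ) / 4) < (D w : ℝ) → w ∈ Z' ∧ H'.degree w = D w) →
    -- (E3)
    (n : ℝ) / 20 ≤ (∑ w ∈ Finset.univ.filter (fun w => w ∉ Z'),
        ((D w : ℝ) - (F'.degree w : ℝ))) →
    -- the conditioning event has positive probability
    0 < ((graphsWithDegreeSeq n D).filter
          (fun G => (∀ a b, a ∈ Z' → b ∈ Z' → (G.Adj a b ↔ H'.Adj a b)) ∧ F' ≤ G)).card →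
    uniformCondProb n D (fun G => G.Adj u v)
        (fun G => (∀ a b, a ∈ Z' → b ∈ Z' → (G.Adj a b ↔ H'.Adj a b)) ∧ F' ≤ G)
      ≤ 40 * (n : ℝ) ^ (-(1 : ℝ) / 2) := by
  refine ⟨20 ^ 4, fun n hn Z H F hH _ u v hv hFuv D _ hE1 hE2 hE3 _ => ?_⟩
  set K := (n : ℝ) ^ ((1 : ℝ) / 4) with hK
  have hnK : (n : ℝ) = K ^ 4 := by
    rw [hK, ← Real.rpow_natCast, ← Real.rpow_mul (Nat.cast_nonneg n)]
    norm_num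
  have hK20 : 20 ≤ K := le_of_pow_le_pow_left₀ four_ne_zero (by positivity)
    (by rw [← hnK]; exact_mod_cast hn)
  have hDv : (D v : ℝ) ≤ K := not_lt.1 fun h => hv (hE2 v h).1
  have hrhs : (n : ℝ) ^ (-(1 : ℝ) / 2) = (K ^ 2)⁻¹ := by
    rw [hnK, ← Real.rpow_natCast, ← Real.rpow_mul (by positivity), ← Real.rpow_natCast,
      ← Real.rpow_neg (by positivity)]
    norm_num
  calc uniformCondProb n D (fun G => G.Adj u v) (IsCompletion Z H F)
      ≤ D u * D v / (K ^ 4 / 40) :=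
        uniformCondProb_adj_le hv hFuv (by positivity) fun G hG _ hGc =>
          le_card_switchPairs hK20 hH hGc (mem_filter.1 hG).2 hv hE1 hE2 (hnK ▸ hE3)
    _ ≤ K * K / (K ^ 4 / 40) := by gcongr
    _ = 40 * (n : ℝ) ^ (-(1 : ℝ) / 2) := by
        rw [hrhs]
        field_simp
end
end

section
/- Let a < 0 < b be real numbers, m ∈ {0,1}, t ∈ ℕ, and y ∈ [a, 0). Let (F_s)_{s=0}^t be a filtration on a probability space, let τ be a stopping time with respect to (F_s)_{s=0}^t, and let Y₀, Y₁, …, Y_t be random variables such that Y_s is F_s-measurable and Y_s − Y_{s−1} ∈ [a, b] almost surely for every s ∈ {1,…,t}. Suppose that for every s ∈ {1,…,t}, E[ 1_{s≤τ}·(−1)^m·(Y_s − Y_{s−1}) | F_{s−1} ] ≤ y·1_{s≤τ} almost surely. Then P[ (−1)^m·(Y_{τ∧t} − Y₀) + 1_{t>τ}·(t−τ)·y > yt/2 ] < exp( − y²t / (12(b−a)²) ). -/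
/-!
Continue the process `(-1)^m Y` after the stopping time `τ` with deterministic increments `y`.
The partial sums `Z_t` of the resulting increments are exactly
`(-1)^m (Y_{τ∧t} - Y_0) + 1_{t>τ} (t - τ) y`, and the increments are bounded by `b - a` and have
conditional drift at most `y` given the past. For `|x| ≤ 1/2` one has
`exp x ≤ 1 + x + 11/18 x²`, so conditioning step by step gives
`E[exp (l Z_t)] ≤ exp (t (l y + 11/18 l² (b - a)²))` for `0 ≤ l ≤ 1 / (2 (b - a))`.
The Chernoff bound with the optimal `l = 9 |y| / (22 (b - a)²)` then bounds the probability
that `Z_t ≥ y t / 2` by `exp (-9 y² t / (88 (b - a)²))`, and `9/88 > 1/12`.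
-/

open MeasureTheory ProbabilityTheory Finset Real

lemma exp_le_one_add_add_mul_sq {x : ℝ} (hx : |x| ≤ 1 / 2) :
    exp x ≤ 1 + x + 11 / 18 * x ^ 2 := by
  -- Taylor's theorem to order two; the remainder `(2/9) |x| ^ 3` is at most `x ^ 2 / 9`
  have hbound := Real.exp_bound (hx.trans (by norm_num)) (n := 3) (by norm_num)
  norm_num [sum_range_succ, Nat.factorial] at hbound
  have hcube : |x| ^ 3 ≤ 1 / 2 * x ^ 2 := by
    rw [pow_succ, ← sq_abs x]; nlinarith [sq_nonneg |x|]
  nlinarith [(abs_le.mp hbound).2]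

lemma exp_neg_mul_div_lt {y c t : ℝ} (hy : y ≠ 0) (hc : c ≠ 0) (ht : 0 < t) :
    exp (-(9 * y ^ 2 * t) / (88 * c ^ 2)) < exp (-(y ^ 2 * t) / (12 * c ^ 2)) := by
  have hpos : 0 < y ^ 2 * t * c ^ 2 := by positivity
  rw [exp_lt_exp, neg_div, neg_div, neg_lt_neg_iff,
    div_lt_div_iff₀ (by positivity) (by positivity)]
  nlinarith

section ConditionalMGF

variable {Ω : Type*} {m m0 : MeasurableSpace Ω} {μ : Measure Ω}

lemma integrable_exp_mul_of_ae_abs_le [IsFiniteMeasure μ] {f : Ω → ℝ} {C : ℝ}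
    (hf : AEMeasurable f μ) (hbdd : ∀ᵐ ω ∂μ, |f ω| ≤ C) (l : ℝ) :
    Integrable (fun ω ↦ exp (l * f ω)) μ :=
  integrable_exp_mul_of_mem_Icc hf (hbdd.mono fun _ h ↦ abs_le.mp h)

lemma condExp_exp_mul_le [IsFiniteMeasure μ] (hm : m ≤ m0) {X : Ω → ℝ} {c y l : ℝ}
    (hX : Integrable X μ) (hbdd : ∀ᵐ ω ∂μ, |X ω| ≤ c) (hdrift : μ[X | m] ≤ᵐ[μ] fun _ ↦ y)
    (hl : 0 ≤ l) (hlc : l * c ≤ 1 / 2) :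
    μ[fun ω ↦ exp (l * X ω) | m] ≤ᵐ[μ] fun _ ↦ exp (l * y + 11 / 18 * l ^ 2 * c ^ 2) := by
  set A : ℝ := 1 + 11 / 18 * l ^ 2 * c ^ 2
  have hquad : (fun ω ↦ exp (l * X ω)) ≤ᵐ[μ] (fun _ ↦ A) + l • X := by
    filter_upwards [hbdd] with ω hω
    have hlX : |l * X ω| ≤ l * c := by
      rw [abs_mul, abs_of_nonneg hl]; exact mul_le_mul_of_nonneg_left hω hl
    have hsq : (l * X ω) ^ 2 ≤ l ^ 2 * c ^ 2 := by
      rw [← mul_pow, ← sq_abs]; exact pow_le_pow_left₀ (abs_nonneg _) hlX 2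
    have := exp_le_one_add_add_mul_sq (hlX.trans hlc)
    simp only [Pi.add_apply, Pi.smul_apply, smul_eq_mul, A]
    linarith
  have hmono := condExp_mono (m := m)
    (integrable_exp_mul_of_ae_abs_le hX.aemeasurable hbdd l) ((integrable_const A).add (hX.smul l))
    hquad
  filter_upwards [hmono, condExp_add (integrable_const A) (hX.smul l) m,
    condExp_smul (m := m) l X, hdrift] with ω hω hadd hsmul hω'
  rw [hadd, Pi.add_apply, condExp_const hm, hsmul, Pi.smul_apply, smul_eq_mul] at hω
  calc _ ≤ A + l * (μ[X | m]) ω := hω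
    _ ≤ A + l * y := by gcongr
    _ ≤ _ := by
      have := add_one_le_exp (l * y + 11 / 18 * l ^ 2 * c ^ 2)
      simp only [A]; linarith

lemma integral_mul_le_of_condExp_le [IsFiniteMeasure μ] (hm : m ≤ m0) {G H : Ω → ℝ} {β : ℝ}
    (hG : StronglyMeasurable[m] G) (hG0 : 0 ≤ G) (hGi : Integrable G μ) (hHi : Integrable H μ)
    (hGH : Integrable (G * H) μ) (hH : μ[H | m] ≤ᵐ[μ] fun _ ↦ β) :
    ∫ ω, G ω * H ω ∂μ ≤ (∫ ω, G ω ∂μ) * β := by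
  calc ∫ ω, G ω * H ω ∂μ = ∫ ω, (μ[G * H | m]) ω ∂μ := (integral_condExp hm).symm
    _ ≤ ∫ ω, G ω * β ∂μ := by
      refine integral_mono_ae integrable_condExp (hGi.mul_const β) ?_
      filter_upwards [condExp_mul_of_stronglyMeasurable_left hG hGH hHi, hH] with ω hpull hω
      rw [hpull, Pi.mul_apply]
      exact mul_le_mul_of_nonneg_left hω (hG0 ω)
    _ = (∫ ω, G ω ∂μ) * β := integral_mul_const β G

end ConditionalMGF

section Concentration

variable {Ω : Type*} {m0 : MeasurableSpace Ω} {μ : Measure Ω} {F : Filtration ℕ m0}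
  {X : ℕ → Ω → ℝ} {c : ℝ} {n : ℕ}

lemma stronglyMeasurable_sum_range (hX : ∀ s < n, StronglyMeasurable[F (s + 1)] (X s)) :
    StronglyMeasurable[F n] (fun ω ↦ ∑ s ∈ range n, X s ω) :=
  Finset.stronglyMeasurable_fun_sum _ fun s hs ↦
    (hX s (mem_range.1 hs)).mono (F.mono (mem_range.1 hs))

lemma ae_abs_sum_range_le (hbdd : ∀ s < n, ∀ᵐ ω ∂μ, |X s ω| ≤ c) :
    ∀ᵐ ω ∂μ, |∑ s ∈ range n, X s ω| ≤ n * c := by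
  have hall : ∀ᵐ ω ∂μ, ∀ s ∈ range n, |X s ω| ≤ c :=
    (Filter.eventually_all_finset _).2 fun s hs ↦ hbdd s (mem_range.1 hs)
  filter_upwards [hall] with ω hω
  calc _ ≤ ∑ s ∈ range n, |X s ω| := abs_sum_le_sum_abs _ _
    _ ≤ ∑ s ∈ range n, c := sum_le_sum hω
    _ = n * c := by simp

lemma integrable_exp_mul_sum_range [IsFiniteMeasure μ]
    (hX : ∀ s < n, StronglyMeasurable[F (s + 1)] (X s))
    (hbdd : ∀ s < n, ∀ᵐ ω ∂μ, |X s ω| ≤ c) (l : ℝ) :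
    Integrable (fun ω ↦ exp (l * ∑ s ∈ range n, X s ω)) μ :=
  integrable_exp_mul_of_ae_abs_le
    ((stronglyMeasurable_sum_range hX).mono (F.le n)).measurable.aemeasurable
    (ae_abs_sum_range_le hbdd) l

theorem integral_exp_mul_sum_range_le [IsProbabilityMeasure μ] {y l : ℝ}
    (hX : ∀ s < n, StronglyMeasurable[F (s + 1)] (X s))
    (hbdd : ∀ s < n, ∀ᵐ ω ∂μ, |X s ω| ≤ c) (hdrift : ∀ s < n, μ[X s | F s] ≤ᵐ[μ] fun _ ↦ y)
    (hl : 0 ≤ l) (hlc : l * c ≤ 1 / 2) :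
    ∫ ω, exp (l * ∑ s ∈ range n, X s ω) ∂μ ≤ exp (l * y + 11 / 18 * l ^ 2 * c ^ 2) ^ n := by
  induction n with
  | zero => simp
  | succ n ih =>
    have hX' : ∀ s < n, StronglyMeasurable[F (s + 1)] (X s) := fun s hs ↦ hX s (by omega)
    have hbdd' : ∀ s < n, ∀ᵐ ω ∂μ, |X s ω| ≤ c := fun s hs ↦ hbdd s (by omega)
    have hXn := (hX n n.lt_succ_self).mono (F.le (n + 1))
    have hbddn := hbdd n n.lt_succ_self
    have hG : StronglyMeasurable[F n] (fun ω ↦ exp (l * ∑ s ∈ range n, X s ω)) :=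
      continuous_exp.comp_stronglyMeasurable ((stronglyMeasurable_sum_range hX').const_mul l)
    have hGH := integrable_exp_mul_sum_range hX hbdd l
    have hsplit : ∀ ω, exp (l * ∑ s ∈ range (n + 1), X s ω)
        = exp (l * ∑ s ∈ range n, X s ω) * exp (l * X n ω) := fun ω ↦ by
      rw [sum_range_succ, mul_add, exp_add]
    simp only [hsplit] at hGH ⊢
    calc _ ≤ (∫ ω, exp (l * ∑ s ∈ range n, X s ω) ∂μ) * exp (l * y + 11 / 18 * l ^ 2 * c ^ 2) :=
          integral_mul_le_of_condExp_le (F.le n) hG (fun _ ↦ (exp_pos _).le)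
            (integrable_exp_mul_sum_range hX' hbdd' l)
            (integrable_exp_mul_of_ae_abs_le hXn.measurable.aemeasurable hbddn l) hGH
            (condExp_exp_mul_le (F.le n) (.of_bound hXn.aestronglyMeasurable c hbddn) hbddn
              (hdrift n n.lt_succ_self) hl hlc)
      _ ≤ exp (l * y + 11 / 18 * l ^ 2 * c ^ 2) ^ n * exp (l * y + 11 / 18 * l ^ 2 * c ^ 2) := by
          gcongr; exact ih hX' hbdd' fun s hs ↦ hdrift s (by omega)
      _ = _ := (pow_succ _ _).symm

theorem measureReal_sum_range_ge_le [IsProbabilityMeasure μ] {y : ℝ}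
    (hX : ∀ s < n, StronglyMeasurable[F (s + 1)] (X s))
    (hbdd : ∀ s < n, ∀ᵐ ω ∂μ, |X s ω| ≤ c) (hdrift : ∀ s < n, μ[X s | F s] ≤ᵐ[μ] fun _ ↦ y)
    (hy : y < 0) (hyc : -y ≤ c) :
    μ.real {ω | y * n / 2 ≤ ∑ s ∈ range n, X s ω} ≤ exp (-(9 * y ^ 2 * n) / (88 * c ^ 2)) := by
  have hc : 0 < c := by linarith
  -- minimizes the Chernoff exponent `l * y / 2 + 11 / 18 * l ^ 2 * c ^ 2`
  set l := 9 * -y / (22 * c ^ 2)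
  have hl : 0 ≤ l := div_nonneg (by linarith) (by positivity)
  have hlc : l * c ≤ 1 / 2 := by
    rw [div_mul_eq_mul_div, div_le_iff₀ (by positivity)]; nlinarith
  calc _ ≤ exp (-l * (y * n / 2)) * mgf (fun ω ↦ ∑ s ∈ range n, X s ω) μ l :=
        measure_ge_le_exp_mul_mgf _ hl (integrable_exp_mul_sum_range hX hbdd l)
    _ ≤ exp (-l * (y * n / 2)) * exp (l * y + 11 / 18 * l ^ 2 * c ^ 2) ^ n := by
        gcongr; exact integral_exp_mul_sum_range_le hX hbdd hdrift hl hlc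
    _ = _ := by
        rw [← exp_nat_mul, ← exp_add]; congr 1; simp only [l]; field_simp; ring

end Concentration

section StoppedIncrement

variable {Ω : Type*} {m0 : MeasurableSpace Ω} {μ : Measure Ω} {F : Filtration ℕ m0}
  {τ : Ω → ℕ} {Y : ℕ → Ω → ℝ} {σ y C : ℝ} {s : ℕ}

def stoppedIncrement (σ y : ℝ) (τ : Ω → ℕ) (Y : ℕ → Ω → ℝ) (s : ℕ) : Ω → ℝ :=
  fun ω ↦ if s < τ ω then σ * (Y (s + 1) ω - Y s ω) else y

lemma sum_range_stoppedIncrement (n : ℕ) (ω : Ω) :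
    ∑ s ∈ range n, stoppedIncrement σ y τ Y s ω
      = σ * (Y (min (τ ω) n) ω - Y 0 ω) + ((n : ℝ) - (min (τ ω) n : ℕ)) * y := by
  induction n with
  | zero => simp
  | succ n ih =>
    rw [sum_range_succ, ih, stoppedIncrement]
    split_ifs with h
    · rw [min_eq_right (by omega : n + 1 ≤ τ ω), min_eq_right (by omega : n ≤ τ ω)]
      push_cast; ring
    · rw [min_eq_left (by omega : τ ω ≤ n + 1), min_eq_left (by omega : τ ω ≤ n)]
      push_cast; ring

lemma sum_range_stoppedIncrement_eq_ite (n : ℕ) (ω : Ω) :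
    ∑ s ∈ range n, stoppedIncrement σ y τ Y s ω
      = σ * (Y (min (τ ω) n) ω - Y 0 ω) + if τ ω < n then ((n : ℝ) - τ ω) * y else 0 := by
  rw [sum_range_stoppedIncrement]
  split_ifs with h
  · rw [min_eq_left h.le]
  · rw [min_eq_right (not_lt.1 h)]; simp

lemma abs_stoppedIncrement_le {ω : Ω} (hσ : |σ| ≤ 1) (hΔ : |Y (s + 1) ω - Y s ω| ≤ C)
    (hy : |y| ≤ C) : |stoppedIncrement σ y τ Y s ω| ≤ C := by
  unfold stoppedIncrement
  split_ifs
  · rw [abs_mul]; nlinarith [abs_nonneg σ, abs_nonneg (Y (s + 1) ω - Y s ω)]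
  · exact hy

lemma measurableSet_lt_of_isStoppingTime (hτ : IsStoppingTime F fun ω ↦ (τ ω : WithTop ℕ))
    (s : ℕ) : MeasurableSet[F s] {ω | s < τ ω} := by
  simpa using hτ.measurableSet_gt s

lemma stronglyMeasurable_stoppedIncrement (hτ : IsStoppingTime F fun ω ↦ (τ ω : WithTop ℕ))
    (hYs : StronglyMeasurable[F s] (Y s)) (hYs' : StronglyMeasurable[F (s + 1)] (Y (s + 1))) :
    StronglyMeasurable[F (s + 1)] (stoppedIncrement σ y τ Y s) :=
  .ite (F.mono s.le_succ _ (measurableSet_lt_of_isStoppingTime hτ s))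
    ((hYs'.sub (hYs.mono (F.mono s.le_succ))).const_mul σ) stronglyMeasurable_const

lemma condExp_stoppedIncrement_le [IsFiniteMeasure μ]
    (hτ : IsStoppingTime F fun ω ↦ (τ ω : WithTop ℕ)) (hσ : |σ| ≤ 1)
    (hYs : StronglyMeasurable[F s] (Y s)) (hYs' : StronglyMeasurable[F (s + 1)] (Y (s + 1)))
    (hΔ : ∀ᵐ ω ∂μ, |Y (s + 1) ω - Y s ω| ≤ C)
    (hdrift : μ[stoppedIncrement σ 0 τ Y s | F s] ≤ᵐ[μ] fun ω ↦ if s < τ ω then y else 0) :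
    μ[stoppedIncrement σ y τ Y s | F s] ≤ᵐ[μ] fun _ ↦ y := by
  set g : Ω → ℝ := fun ω ↦ if s < τ ω then 0 else y
  have hsplit : stoppedIncrement σ y τ Y s = stoppedIncrement σ 0 τ Y s + g := by
    ext ω; simp only [stoppedIncrement, g, Pi.add_apply]; split_ifs <;> simp
  have hfi : Integrable (stoppedIncrement σ 0 τ Y s) μ := by
    refine Integrable.of_bound
      ((stronglyMeasurable_stoppedIncrement hτ hYs hYs').mono (F.le _)).aestronglyMeasurable C ?_
    filter_upwards [hΔ] with ω hω
    exact abs_stoppedIncrement_le hσ hω (by simpa using (abs_nonneg _).trans hω)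
  have hg : StronglyMeasurable[F s] g :=
    .ite (measurableSet_lt_of_isStoppingTime hτ s) stronglyMeasurable_const
      stronglyMeasurable_const
  have hgi : Integrable g μ :=
    .of_bound (hg.mono (F.le s)).aestronglyMeasurable |y| (ae_of_all _ fun ω ↦ by
      simp only [g, Real.norm_eq_abs]; split_ifs <;> simp)
  rw [hsplit]
  filter_upwards [condExp_add hfi hgi (F s), hdrift] with ω hadd hω
  rw [hadd, Pi.add_apply, condExp_of_stronglyMeasurable (F.le s) hg hgi]
  simp only [g]
  split_ifs at hω ⊢ <;> linarith

end StoppedIncrement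

theorem stopped_concentration_general
    {Ω : Type*} {m0 : MeasurableSpace Ω} (μ : Measure Ω) [IsProbabilityMeasure μ]
    (a b : ℝ) (hb : 0 < b) (m : ℕ) (t : ℕ)
    (y : ℝ) (hya : a ≤ y) (hy0 : y < 0)
    (F : Filtration ℕ m0)
    (τ : Ω → ℕ) (hτ : IsStoppingTime F (fun ω => (τ ω : WithTop ℕ)))
    (Y : ℕ → Ω → ℝ)
    (hmeas : ∀ s, s ≤ t → StronglyMeasurable[F s] (Y s))
    (hbdd : ∀ s, 1 ≤ s → s ≤ t →
      ∀ᵐ ω ∂μ, Y s ω - Y (s - 1) ω ∈ Set.Icc a b)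
    (hdrift : ∀ s, 1 ≤ s → s ≤ t →
      ∀ᵐ ω ∂μ,
        (μ[fun ω' => (if s ≤ τ ω' then ((-1 : ℝ) ^ m) * (Y s ω' - Y (s - 1) ω') else 0) |
            F (s - 1)]) ω
          ≤ (if s ≤ τ ω then y else 0)) :
    (μ {ω | y * t / 2 <
        ((-1 : ℝ) ^ m) * (Y (min (τ ω) t) ω - Y 0 ω)
          + (if τ ω < t then ((t : ℝ) - (τ ω : ℝ)) * y else 0)}).toReal
      < Real.exp (-(y ^ 2 * t) / (12 * (b - a) ^ 2)) := by
  set X := stoppedIncrement ((-1 : ℝ) ^ m) y τ Y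
  simp_rw [← sum_range_stoppedIncrement_eq_ite, ← measureReal_def]
  rcases t.eq_zero_or_pos with rfl | ht
  · simp
  have hΔ : ∀ s < t, ∀ᵐ ω ∂μ, |Y (s + 1) ω - Y s ω| ≤ b - a := fun s hs ↦ by
    filter_upwards [hbdd (s + 1) (by omega) hs] with ω hω
    simp only [Nat.add_sub_cancel, Set.mem_Icc] at hω
    exact abs_le.2 ⟨by linarith, by linarith⟩
  have hσ : |(-1 : ℝ) ^ m| ≤ 1 := by simp
  have hyc : |y| ≤ b - a := abs_le.2 ⟨by linarith, by linarith⟩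
  have hX : ∀ s < t, StronglyMeasurable[F (s + 1)] (X s) := fun s hs ↦
    stronglyMeasurable_stoppedIncrement hτ (hmeas s hs.le) (hmeas (s + 1) hs)
  have hdrift' : ∀ s < t, μ[stoppedIncrement ((-1 : ℝ) ^ m) 0 τ Y s | F s]
      ≤ᵐ[μ] fun ω ↦ if s < τ ω then y else 0 := fun s hs ↦ by
    unfold stoppedIncrement Filter.EventuallyLE
    simpa using hdrift (s + 1) (by omega) hs
  calc μ.real {ω | y * t / 2 < ∑ s ∈ range t, X s ω}
      ≤ μ.real {ω | y * t / 2 ≤ ∑ s ∈ range t, X s ω} :=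
        measureReal_mono (Set.ofPred_subset_ofPred.2 fun _ h ↦ h.le)
    _ ≤ exp (-(9 * y ^ 2 * t) / (88 * (b - a) ^ 2)) :=
      measureReal_sum_range_ge_le hX
        (fun s hs ↦ (hΔ s hs).mono fun ω hω ↦ abs_stoppedIncrement_le hσ hω hyc)
        (fun s hs ↦ condExp_stoppedIncrement_le hτ hσ (hmeas s hs.le) (hmeas (s + 1) hs)
          (hΔ s hs) (hdrift' s hs)) hy0 (by linarith)
    _ < exp (-(y ^ 2 * t) / (12 * (b - a) ^ 2)) :=
      exp_neg_mul_div_lt hy0.ne (by linarith) (by exact_mod_cast ht)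

/-- **Lemma (a maximal-type concentration inequality for supermartingale-like processes
with a stopping time).**
If the increments `Y_s - Y_{s-1}` lie in `[a,b]` and, up to the stopping time `τ`, the
conditional expectation of `(-1)^m (Y_s - Y_{s-1})` given `F_{s-1}` is at most `y < 0`,
then `(-1)^m (Y_{τ∧t} - Y_0) + 1_{t>τ}(t-τ)y > yt/2` holds with probability less than
`exp(-y²t/(12(b-a)²))`. -/
theorem stopped_concentration
    {Ω : Type*} {m0 : MeasurableSpace Ω} (μ : Measure Ω) [IsProbabilityMeasure μ]
    (a b : ℝ) (ha : a < 0) (hb : 0 < b) (m : ℕ) (hm : m ≤ 1) (t : ℕ)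
    (y : ℝ) (hya : a ≤ y) (hy0 : y < 0)
    (F : Filtration ℕ m0)
    (τ : Ω → ℕ) (hτ : IsStoppingTime F (fun ω => (τ ω : WithTop ℕ)))
    (Y : ℕ → Ω → ℝ)
    (hmeas : ∀ s, s ≤ t → StronglyMeasurable[F s] (Y s))
    (hbdd : ∀ s, 1 ≤ s → s ≤ t →
      ∀ᵐ ω ∂μ, Y s ω - Y (s - 1) ω ∈ Set.Icc a b)
    (hdrift : ∀ s, 1 ≤ s → s ≤ t →
      ∀ᵐ ω ∂μ,
        (μ[fun ω' => (if s ≤ τ ω' then ((-1 : ℝ) ^ m) * (Y s ω' - Y (s - 1) ω') else 0) |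
            F (s - 1)]) ω
          ≤ (if s ≤ τ ω then y else 0)) :
    (μ {ω | y * t / 2 <
        ((-1 : ℝ) ^ m) * (Y (min (τ ω) t) ω - Y 0 ω)
          + (if τ ω < t then ((t : ℝ) - (τ ω : ℝ)) * y else 0)}).toReal
      < Real.exp (-(y ^ 2 * t) / (12 * (b - a) ^ 2)) :=
  stopped_concentration_general μ a b hb m t y hya hy0 F τ hτ Y hmeas hbdd hdrift
end
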